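/- Let E be a directed graph, K a field, and z a nonzero element of the center Z(KE) of the path algebra. If u and v are vertices of E that are connected (in the underlying undirected graph of E), then zu ≠ 0 if and only if zv ≠ 0. -/

import Mathlib

/-! Basic infrastructure: directed graphs and their path algebras.

The path algebra `KE` is realized as the non-unital subalgebra generated by the
(images of the) vertices and edges inside the unital algebra `PA K E`, which is the
quotient of the free algebra on vertices and edges by the usual path-algebra
relations (vertices are orthogonal idempotents acting as local units on edges).
Words of composable edges are exactly the paths, so `KE` has the paths as a basis. -/

/-- A directed graph `E = (E⁰, E¹, s, r)`. -/
structure DirGraph : Type 1 where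
  V : Type
  Edge : Type
  s : Edge → V
  r : Edge → V

/-- A (non-unital, possibly non-closed) subset `S` of an algebra is *prime* if it is nonzero
and `a S b = 0` implies `a = 0` or `b = 0` for `a, b ∈ S`. -/
def IsPrimeSet {A : Type} [NonUnitalNonAssocSemiring A] (S : Set A) : Prop :=
  (∃ a ∈ S, a ≠ 0) ∧ ∀ a ∈ S, ∀ b ∈ S, (∀ x ∈ S, a * x * b = 0) → a = 0 ∨ b = 0

/-- `J` is a two-sided ideal of the (possibly non-unital) subalgebra with carrier `S`. -/
def IsIdealOf (K : Type) [Field K] {A : Type} [Ring A] [Algebra K A] (S J : Set A) : Prop :=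
  J ⊆ S ∧ (0 : A) ∈ J ∧ (∀ x ∈ J, ∀ y ∈ J, x + y ∈ J) ∧
    (∀ k : K, ∀ x ∈ J, k • x ∈ J) ∧ (∀ a ∈ S, ∀ x ∈ J, a * x ∈ J ∧ x * a ∈ J)

namespace DirGraph

/-- Generators of the path algebra: vertices and edges. -/
abbrev Gen (E : DirGraph) : Type := E.V ⊕ E.Edge

variable (K : Type) [Field K] (E : DirGraph)

/-- The defining relations of the path algebra: vertices are orthogonal idempotents,
`s(e)·e = e`, `e·r(e) = e`, and all other vertex-edge products vanish. -/
inductive PathRel : FreeAlgebra K E.Gen → FreeAlgebra K E.Gen → Prop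
  | vv_eq (u : E.V) :
      PathRel (FreeAlgebra.ι K (Sum.inl u) * FreeAlgebra.ι K (Sum.inl u))
        (FreeAlgebra.ι K (Sum.inl u))
  | vv_ne (u v : E.V) : u ≠ v →
      PathRel (FreeAlgebra.ι K (Sum.inl u) * FreeAlgebra.ι K (Sum.inl v)) 0
  | ve_eq (e : E.Edge) :
      PathRel (FreeAlgebra.ι K (Sum.inl (E.s e)) * FreeAlgebra.ι K (Sum.inr e))
        (FreeAlgebra.ι K (Sum.inr e))
  | ve_ne (u : E.V) (e : E.Edge) : E.s e ≠ u →
      PathRel (FreeAlgebra.ι K (Sum.inl u) * FreeAlgebra.ι K (Sum.inr e)) 0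
  | ev_eq (e : E.Edge) :
      PathRel (FreeAlgebra.ι K (Sum.inr e) * FreeAlgebra.ι K (Sum.inl (E.r e)))
        (FreeAlgebra.ι K (Sum.inr e))
  | ev_ne (e : E.Edge) (u : E.V) : E.r e ≠ u →
      PathRel (FreeAlgebra.ι K (Sum.inr e) * FreeAlgebra.ι K (Sum.inl u)) 0

/-- The ambient unital algebra (the unitalization of the path algebra). -/
abbrev PA : Type := RingQuot (E.PathRel K)

/-- The image of a vertex in the path algebra. -/
noncomputable def vtx (u : E.V) : E.PA K :=
  RingQuot.mkAlgHom K (E.PathRel K) (FreeAlgebra.ι K (Sum.inl u))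

/-- The image of an edge in the path algebra. -/
noncomputable def edg (e : E.Edge) : E.PA K :=
  RingQuot.mkAlgHom K (E.PathRel K) (FreeAlgebra.ι K (Sum.inr e))

/-- The path algebra `KE`: the (non-unital) subalgebra spanned by all paths, i.e.
generated by the vertices and edges. -/
noncomputable def KE : NonUnitalSubalgebra K (E.PA K) :=
  NonUnitalAlgebra.adjoin K (Set.range (E.vtx K) ∪ Set.range (E.edg K))

/-- The center `Z(KE)` of the path algebra. -/
def relCenter : Set (E.PA K) :=
  {z | z ∈ E.KE K ∧ ∀ a ∈ E.KE K, a * z = z * a}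

/-- `E.IsPathFrom u v l` : the list of edges `l` is a path from `u` to `v`
(`l = []` is the trivial path at `u = v`). -/
def IsPathFrom : E.V → E.V → List E.Edge → Prop
  | u, v, [] => u = v
  | u, v, e :: l => E.s e = u ∧ IsPathFrom (E.r e) v l

/-- The element of the path algebra corresponding to the path starting at `u`
with list of edges `l` (for `l = []` this is the vertex `u` itself). -/
noncomputable def pathElem (u : E.V) (l : List E.Edge) : E.PA K :=
  E.vtx K u * (l.map (E.edg K)).prod

/-- The sum of all vertices: the unit of `KE` when `E⁰` is finite. -/
noncomputable def unitKE : E.PA K := ∑ᶠ u : E.V, E.vtx K u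

/-- The scalar multiples `K·1` of the unit of `KE`. -/
noncomputable def scalarSet : Set (E.PA K) := Set.range fun k : K => k • E.unitKE K

/-- One step in the underlying undirected graph. -/
def Step (u v : E.V) : Prop :=
  (∃ e : E.Edge, E.s e = u ∧ E.r e = v) ∨ (∃ e : E.Edge, E.s e = v ∧ E.r e = u)

/-- `u ∼ v` : the vertices `u` and `v` are connected in the underlying undirected graph. -/
def Connected (u v : E.V) : Prop := Relation.ReflTransGen E.Step u v

/-- The graph `E` is connected. -/
def IsConnectedGraph : Prop := ∀ u v : E.V, E.Connected u v

/-- The graph `E` is a cycle: `n ≥ 1` vertices `u₁, …, uₙ` and `n` edges `f₁, …, fₙ` with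
`s(fᵢ) = uᵢ`, `r(fᵢ) = uᵢ₊₁` (indices mod `n`). -/
def IsCycleGraph : Prop :=
  ∃ n : ℕ, ∃ hn : 0 < n, ∃ (hv : Fin n ≃ E.V) (he : Fin n ≃ E.Edge),
    ∀ i : Fin n, E.s (he i) = hv i ∧ E.r (he i) = hv ⟨(i.1 + 1) % n, Nat.mod_lt _ hn⟩

end DirGraph

/-! If `e : u ⟶ v` and `z` is central, then `e · (z v) = z e = (z u) · e`. So it suffices that
left multiplication by `e` is injective on the corner `v A v` of the path algebra `A` and right
multiplication by `e` is injective on `u A u`. The first is read off the left regular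
representation on the span of formal paths `(w, l)`: there `e` prepends itself to the paths
starting at `v`, and `a ∈ v A v` is recovered from its value on the trivial path at `v`. The
second follows from the first for the reversed graph, whose path algebra is `Aᵐᵒᵖ`. -/

namespace Finsupp

variable {R : Type*} [Semiring R] {α β γ : Type*}

noncomputable def lmapPartial (f : α → Option β) : (α →₀ R) →ₗ[R] (β →₀ R) :=
  linearCombination R fun a => (f a).elim 0 (single · 1)

@[simp] lemma lmapPartial_single (f : α → Option β) (a : α) (r : R) :
    lmapPartial f (single a r) = (f a).elim 0 (single · r) := by
  rcases h : f a with _ | b <;> simp [lmapPartial, h]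

lemma lmapPartial_none : lmapPartial (R := R) (fun _ : α => (none : Option β)) = 0 := by
  ext; simp

lemma lmapPartial_comp (f : β → Option γ) (g : α → Option β) :
    lmapPartial (R := R) f ∘ₗ lmapPartial g = lmapPartial fun a => (g a).bind f := by
  ext a : 2
  rcases h : g a with _ | b <;> simp [h]

lemma lmapPartial_apply_eq_zero {f : α → Option β} {b : β} (hb : ∀ a, f a ≠ .some b)
    (c : α →₀ R) : lmapPartial f c b = 0 := by
  induction c using Finsupp.induction_linear with
  | zero => simp
  | add c d hc hd => simp [hc, hd]
  | single a r =>
      rcases h : f a with _ | b'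
      · simp [h]
      · have : b' ≠ b := fun hb' => hb a (h.trans (congrArg Option.some hb'))
        simp [h, this]

lemma lmapPartial_apply_of_injective {f : α → Option β} {a : α} {b : β} (ha : f a = .some b)
    (hinj : ∀ a', f a' = .some b → a' = a) (c : α →₀ R) : lmapPartial f c b = c a := by
  induction c using Finsupp.induction_linear with
  | zero => simp
  | add c d hc hd => simp [hc, hd]
  | single a' r =>
      rcases h : f a' with _ | b'
      · have : a' ≠ a := by rintro rfl; simp [ha] at h
        simp [h, this]
      · by_cases hb : b' = b
        · subst hb
          obtain rfl := hinj a' h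
          simp [h]
        · have : a' ≠ a := by rintro rfl; simp [ha] at h; exact hb h.symm
          simp [h, hb, this]

lemma linearCombination_lmapPartial {R A : Type*} [CommSemiring R] [Semiring A] [Algebra R A]
    {f : α → Option α} {v : α → A} {x : A} (hfv : ∀ a, (f a).elim 0 v = x * v a)
    (c : α →₀ R) : linearCombination R v (lmapPartial f c) = x * linearCombination R v c := by
  induction c using Finsupp.induction_linear with
  | zero => simp
  | add c d hc hd => simp [hc, hd, mul_add]
  | single a r =>
      rw [lmapPartial_single, linearCombination_single, mul_smul_comm, ← hfv]
      rcases f a with _ | b <;> simp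

end Finsupp

namespace DirGraph

variable {K : Type} [Field K] {E : DirGraph}

open Finsupp

@[simp] lemma vtx_mul_self (u : E.V) : E.vtx K u * E.vtx K u = E.vtx K u := by
  simp only [vtx, ← map_mul]
  exact RingQuot.mkAlgHom_rel K (PathRel.vv_eq u)

lemma vtx_mul_vtx_of_ne {u v : E.V} (h : u ≠ v) : E.vtx K u * E.vtx K v = 0 := by
  simp only [vtx, ← map_mul]
  rw [RingQuot.mkAlgHom_rel K (PathRel.vv_ne u v h), map_zero]

@[simp] lemma vtx_src_mul_edg (e : E.Edge) : E.vtx K (E.s e) * E.edg K e = E.edg K e := by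
  simp only [vtx, edg, ← map_mul]
  exact RingQuot.mkAlgHom_rel K (PathRel.ve_eq e)

lemma vtx_mul_edg_of_ne {u : E.V} {e : E.Edge} (h : E.s e ≠ u) :
    E.vtx K u * E.edg K e = 0 := by
  simp only [vtx, edg, ← map_mul]
  rw [RingQuot.mkAlgHom_rel K (PathRel.ve_ne u e h), map_zero]

@[simp] lemma edg_mul_vtx_tgt (e : E.Edge) : E.edg K e * E.vtx K (E.r e) = E.edg K e := by
  simp only [vtx, edg, ← map_mul]
  exact RingQuot.mkAlgHom_rel K (PathRel.ev_eq e)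

lemma edg_mul_vtx_of_ne {e : E.Edge} {u : E.V} (h : E.r e ≠ u) :
    E.edg K e * E.vtx K u = 0 := by
  simp only [vtx, edg, ← map_mul]
  rw [RingQuot.mkAlgHom_rel K (PathRel.ev_ne e u h), map_zero]

lemma pathElem_cons (w : E.V) (e : E.Edge) (l : List E.Edge) :
    E.pathElem K w (e :: l) = E.vtx K w * (E.edg K e * E.pathElem K (E.r e) l) := by
  simp only [pathElem, List.map_cons, List.prod_cons, ← mul_assoc, edg_mul_vtx_tgt]

open Classical in
lemma vtx_mul_pathElem (u w : E.V) (l : List E.Edge) :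
    E.vtx K u * E.pathElem K w l = if w = u then E.pathElem K w l else 0 := by
  split_ifs with h
  · subst h
    rw [pathElem, ← mul_assoc, vtx_mul_self]
  · rw [pathElem, ← mul_assoc, vtx_mul_vtx_of_ne (Ne.symm h), zero_mul]

open Classical in
lemma edg_mul_pathElem (e : E.Edge) (w : E.V) (l : List E.Edge) :
    E.edg K e * E.pathElem K w l = if w = E.r e then E.pathElem K (E.s e) (e :: l) else 0 := by
  split_ifs with h
  · subst h
    rw [pathElem_cons, ← mul_assoc, vtx_src_mul_edg]
  · rw [pathElem, ← mul_assoc, edg_mul_vtx_of_ne (Ne.symm h), zero_mul]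

/- `(w, l)` stands for the element `pathElem w l`; these partial maps describe left
multiplication by `u` and by `e` on such elements (`none` meaning `0`). -/
open Classical in
noncomputable def vtxAct (E : DirGraph) (u : E.V) (p : E.V × List E.Edge) :
    Option (E.V × List E.Edge) :=
  if p.1 = u then some p else none

open Classical in
noncomputable def edgAct (E : DirGraph) (e : E.Edge) (p : E.V × List E.Edge) :
    Option (E.V × List E.Edge) :=
  if p.1 = E.r e then some (E.s e, e :: p.2) else none

variable (K E) in
noncomputable def leftRegFree :
    FreeAlgebra K E.Gen →ₐ[K] Module.End K (E.V × List E.Edge →₀ K) :=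
  FreeAlgebra.lift K
    (Sum.elim (fun u => lmapPartial (E.vtxAct u)) fun e => lmapPartial (E.edgAct e))

lemma leftRegFree_rel {x y : FreeAlgebra K E.Gen} (h : E.PathRel K x y) :
    E.leftRegFree K x = E.leftRegFree K y := by
  cases h <;>
    simp only [leftRegFree, map_mul, map_zero, FreeAlgebra.lift_ι_apply, Sum.elim_inl,
      Sum.elim_inr, Module.End.mul_eq_comp, lmapPartial_comp, ← lmapPartial_none] <;>
    congr 1 <;> funext ⟨w, l⟩ <;> grind [vtxAct, edgAct]

variable (K E) in
noncomputable def leftReg : E.PA K →ₐ[K] Module.End K (E.V × List E.Edge →₀ K) :=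
  RingQuot.liftAlgHom K ⟨E.leftRegFree K, fun _ _ h => leftRegFree_rel h⟩

@[simp] lemma leftReg_vtx (u : E.V) : E.leftReg K (E.vtx K u) = lmapPartial (E.vtxAct u) := by
  simp [leftReg, vtx, leftRegFree]

@[simp] lemma leftReg_edg (e : E.Edge) : E.leftReg K (E.edg K e) = lmapPartial (E.edgAct e) := by
  simp [leftReg, edg, leftRegFree]

variable (K E) in
noncomputable def pathCombination : (E.V × List E.Edge →₀ K) →ₗ[K] E.PA K :=
  linearCombination K fun p => E.pathElem K p.1 p.2

lemma pathCombination_leftReg (a : E.PA K) (m : E.V × List E.Edge →₀ K) :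
    E.pathCombination K (E.leftReg K a m) = a * E.pathCombination K m := by
  obtain ⟨x, rfl⟩ := RingQuot.mkAlgHom_surjective K (E.PathRel K) a
  induction x using FreeAlgebra.induction generalizing m with
  | grade0 r =>
      rw [AlgHom.commutes, AlgHom.commutes, Module.algebraMap_end_apply, map_smul,
        Algebra.smul_def]
  | grade1 g =>
      rcases g with u | e
      · rw [show RingQuot.mkAlgHom K (E.PathRel K) (FreeAlgebra.ι K (Sum.inl u)) = E.vtx K u
          from rfl, leftReg_vtx]
        refine linearCombination_lmapPartial (fun ⟨w, l⟩ => ?_) m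
        rw [vtx_mul_pathElem, vtxAct]
        split_ifs <;> rfl
      · rw [show RingQuot.mkAlgHom K (E.PathRel K) (FreeAlgebra.ι K (Sum.inr e)) = E.edg K e
          from rfl, leftReg_edg]
        refine linearCombination_lmapPartial (fun ⟨w, l⟩ => ?_) m
        rw [edg_mul_pathElem, edgAct]
        split_ifs <;> rfl
  | mul x y hx hy => rw [map_mul, map_mul, Module.End.mul_apply, hx, hy, mul_assoc]
  | add x y hx hy => rw [map_add, map_add, LinearMap.add_apply, map_add, hx, hy, add_mul]

lemma eq_zero_of_edg_mul_eq_zero {a : E.PA K} (e : E.Edge) (hl : E.vtx K (E.r e) * a = a)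
    (hr : a * E.vtx K (E.r e) = a) (h : E.edg K e * a = 0) : a = 0 := by
  set c := E.leftReg K a (single (E.r e, []) 1) with hc
  have hac : E.pathCombination K c = a := by
    rw [hc, pathCombination_leftReg]
    simp [pathCombination, pathElem, hr]
  have hvc : lmapPartial (E.vtxAct (E.r e)) c = c := by
    rw [← leftReg_vtx, ← Module.End.mul_apply, ← map_mul, hl]
  have hec : lmapPartial (E.edgAct e) c = 0 := by
    rw [← leftReg_edg, ← Module.End.mul_apply, ← map_mul, h, map_zero, LinearMap.zero_apply]
  suffices c = 0 by rw [← hac, this, map_zero]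
  ext ⟨w, l⟩
  by_cases hw : w = E.r e
  · subst hw
    have hinj : ∀ p, E.edgAct e p = some (E.s e, e :: l) → p = (E.r e, l) := by
      grind [edgAct]
    simpa [hec] using (lmapPartial_apply_of_injective (by simp [edgAct]) hinj c).symm
  · rw [← hvc, lmapPartial_apply_eq_zero (by grind [vtxAct])]
    rfl

variable (E) in
abbrev reverse : DirGraph := ⟨E.V, E.Edge, E.r, E.s⟩

variable (K E) in
noncomputable def reverseFree : FreeAlgebra K E.Gen →ₐ[K] (E.reverse.PA K)ᵐᵒᵖ :=
  FreeAlgebra.lift K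
    (Sum.elim (fun u => .op (E.reverse.vtx K u)) fun e => .op (E.reverse.edg K e))

lemma reverseFree_rel {x y : FreeAlgebra K E.Gen} (h : E.PathRel K x y) :
    E.reverseFree K x = E.reverseFree K y := by
  cases h <;>
    simp only [reverseFree, map_mul, map_zero, FreeAlgebra.lift_ι_apply, Sum.elim_inl,
      Sum.elim_inr, ← MulOpposite.op_mul, ← MulOpposite.op_zero, MulOpposite.op_inj]
  · exact vtx_mul_self (E := E.reverse) _
  · exact vtx_mul_vtx_of_ne (E := E.reverse) (Ne.symm ‹_›)
  · exact edg_mul_vtx_tgt (E := E.reverse) _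
  · exact edg_mul_vtx_of_ne (E := E.reverse) ‹_›
  · exact vtx_src_mul_edg (E := E.reverse) _
  · exact vtx_mul_edg_of_ne (E := E.reverse) ‹_›

variable (K E) in
noncomputable def reverseHom : E.PA K →ₐ[K] (E.reverse.PA K)ᵐᵒᵖ :=
  RingQuot.liftAlgHom K ⟨E.reverseFree K, fun _ _ h => reverseFree_rel h⟩

@[simp] lemma reverseHom_vtx (u : E.V) :
    E.reverseHom K (E.vtx K u) = .op (E.reverse.vtx K u) := by
  simp [reverseHom, vtx, reverseFree]

@[simp] lemma reverseHom_edg (e : E.Edge) :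
    E.reverseHom K (E.edg K e) = .op (E.reverse.edg K e) := by
  simp [reverseHom, edg, reverseFree]

lemma reverseHom_reverseHom (a : E.PA K) :
    (E.reverse.reverseHom K (E.reverseHom K a).unop).unop = a := by
  obtain ⟨x, rfl⟩ := RingQuot.mkAlgHom_surjective K (E.PathRel K) a
  induction x using FreeAlgebra.induction with
  | grade0 r => simp
  | grade1 g =>
      rcases g with u | e
      · change (E.reverse.reverseHom K (E.reverseHom K (E.vtx K u)).unop).unop = E.vtx K u
        simp
      · change (E.reverse.reverseHom K (E.reverseHom K (E.edg K e)).unop).unop = E.edg K e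
        simp
  | mul x y hx hy => simp [hx, hy]
  | add x y hx hy => simp [hx, hy]

lemma eq_zero_of_mul_edg_eq_zero {a : E.PA K} (e : E.Edge) (hl : E.vtx K (E.s e) * a = a)
    (hr : a * E.vtx K (E.s e) = a) (h : a * E.edg K e = 0) : a = 0 := by
  have hrev : (E.reverseHom K a).unop = 0 := by
    refine eq_zero_of_edg_mul_eq_zero (E := E.reverse) e ?_ ?_ ?_
    · simpa using congrArg (fun x => (E.reverseHom K x).unop) hr
    · simpa using congrArg (fun x => (E.reverseHom K x).unop) hl
    · simpa using congrArg (fun x => (E.reverseHom K x).unop) h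
  rw [← reverseHom_reverseHom a, hrev, map_zero, MulOpposite.unop_zero]

lemma vtx_mem_KE (u : E.V) : E.vtx K u ∈ E.KE K :=
  NonUnitalAlgebra.subset_adjoin K (Or.inl ⟨u, rfl⟩)

lemma edg_mem_KE (e : E.Edge) : E.edg K e ∈ E.KE K :=
  NonUnitalAlgebra.subset_adjoin K (Or.inr ⟨e, rfl⟩)

section Center

variable {z : E.PA K}

lemma vtx_mul_mul_vtx_of_mem_relCenter (hz : z ∈ E.relCenter K) (u : E.V) :
    E.vtx K u * (z * E.vtx K u) = z * E.vtx K u := by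
  rw [← mul_assoc, hz.2 _ (vtx_mem_KE u), mul_assoc, vtx_mul_self]

lemma mul_vtx_tgt_eq_zero (hz : z ∈ E.relCenter K) (e : E.Edge)
    (h : z * E.vtx K (E.s e) = 0) : z * E.vtx K (E.r e) = 0 := by
  refine eq_zero_of_edg_mul_eq_zero e (vtx_mul_mul_vtx_of_mem_relCenter hz _)
    (by rw [mul_assoc, vtx_mul_self]) ?_
  calc E.edg K e * (z * E.vtx K (E.r e))
      = z * (E.vtx K (E.s e) * E.edg K e) * E.vtx K (E.r e) := by
        rw [← mul_assoc, hz.2 _ (edg_mem_KE e), vtx_src_mul_edg]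
    _ = 0 := by rw [← mul_assoc, h, zero_mul, zero_mul]

lemma mul_vtx_src_eq_zero (hz : z ∈ E.relCenter K) (e : E.Edge)
    (h : z * E.vtx K (E.r e) = 0) : z * E.vtx K (E.s e) = 0 := by
  refine eq_zero_of_mul_edg_eq_zero e (vtx_mul_mul_vtx_of_mem_relCenter hz _)
    (by rw [mul_assoc, vtx_mul_self]) ?_
  calc z * E.vtx K (E.s e) * E.edg K e
      = z * (E.edg K e * E.vtx K (E.r e)) := by rw [mul_assoc, vtx_src_mul_edg, edg_mul_vtx_tgt]
    _ = E.edg K e * (z * E.vtx K (E.r e)) := by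
        rw [← mul_assoc, ← hz.2 _ (edg_mem_KE e), mul_assoc]
    _ = 0 := by rw [h, mul_zero]

lemma mul_vtx_eq_zero_iff_of_step (hz : z ∈ E.relCenter K) {u v : E.V} (huv : E.Step u v) :
    z * E.vtx K u = 0 ↔ z * E.vtx K v = 0 := by
  rcases huv with ⟨e, rfl, rfl⟩ | ⟨e, rfl, rfl⟩
  · exact ⟨mul_vtx_tgt_eq_zero hz e, mul_vtx_src_eq_zero hz e⟩
  · exact ⟨mul_vtx_src_eq_zero hz e, mul_vtx_tgt_eq_zero hz e⟩

lemma mul_vtx_eq_zero_iff_of_connected (hz : z ∈ E.relCenter K) {u v : E.V}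
    (huv : E.Connected u v) :
    z * E.vtx K u = 0 ↔ z * E.vtx K v = 0 := by
  induction huv with
  | refl => rfl
  | tail _ hstep ih => exact ih.trans (mul_vtx_eq_zero_iff_of_step hz hstep)

end Center

end DirGraph

theorem stmt1_general (K : Type) [Field K] (E : DirGraph) (z : E.PA K)
    (hz : z ∈ E.relCenter K) (u v : E.V) (huv : E.Connected u v) :
    z * E.vtx K u ≠ 0 ↔ z * E.vtx K v ≠ 0 :=
  not_congr (DirGraph.mul_vtx_eq_zero_iff_of_connected hz huv)

/-- If `z ∈ Z(KE)` is nonzero and `u ∼ v`, then `zu ≠ 0 ↔ zv ≠ 0`. -/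
theorem stmt1 (K : Type) [Field K] (E : DirGraph) (z : E.PA K)
    (hz : z ∈ E.relCenter K) (hz0 : z ≠ 0) (u v : E.V) (huv : E.Connected u v) :
    z * E.vtx K u ≠ 0 ↔ z * E.vtx K v ≠ 0 :=
  stmt1_general K E z hz u v huv
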